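/- Let (X,‖·‖) be a separable real Banach space and φ: P_X → P_X a surjective π-isometry. Then φ maps the set Δ_X of Dirac measures onto Δ_X, i.e., φ(Δ_X) = Δ_X. -/

import Mathlib

open MeasureTheory Metric Set TopologicalSpace

/-- The (one-sided) Lévy–Prokhorov distance of two Borel probability measures. -/
noncomputable def LPdist {X : Type*} [MetricSpace X] [MeasurableSpace X]
    (μ ν : ProbabilityMeasure X) : ℝ :=
  sInf {ε : ℝ | 0 < ε ∧ ∀ A : Set X, MeasurableSet A →
    (μ : Measure X) A ≤ (ν : Measure X) (thickening ε A) + ENNReal.ofReal ε}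

/-- The s-Lévy–Prokhorov distance. -/
noncomputable def LPsdist {X : Type*} [MetricSpace X] [MeasurableSpace X]
    (s : ℝ) (μ ν : ProbabilityMeasure X) : ℝ :=
  sInf {ε : ℝ | 0 < ε ∧ ∀ A : Set X, MeasurableSet A →
    ENNReal.ofReal s * (μ : Measure X) A ≤
      ENNReal.ofReal s * (ν : Measure X) (thickening ε A) + ENNReal.ofReal ε}

/-- The support of a Borel probability measure. -/
def mSupport {X : Type*} [MetricSpace X] [MeasurableSpace X]
    (μ : ProbabilityMeasure X) : Set X :=
  {x : X | ∀ r : ℝ, 0 < r → 0 < (μ : Measure X) (ball x r)}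

/-- The Dirac measure as a probability measure. -/
noncomputable def diracPM {X : Type*} [MeasurableSpace X] (x : X) : ProbabilityMeasure X :=
  ⟨Measure.dirac x, inferInstance⟩

/-- Finitely supported probability measures: finite convex combinations of Dirac measures. -/
def IsFinitelySupported {X : Type*} [MeasurableSpace X] (μ : ProbabilityMeasure X) : Prop :=
  ∃ (s : Finset X) (w : X → ℝ), (∀ x ∈ s, 0 < w x) ∧ (∑ x ∈ s, w x = 1) ∧
    (μ : Measure X) = ∑ x ∈ s, ENNReal.ofReal (w x) • Measure.dirac x

/-- The unit distance set of a set of probability measures. -/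
def unitDistSet {X : Type*} [MetricSpace X] [MeasurableSpace X]
    (𝒜 : Set (ProbabilityMeasure X)) : Set (ProbabilityMeasure X) :=
  {ν | ∀ μ ∈ 𝒜, LPdist μ ν = 1}

/-- The witness function. -/
noncomputable def witness {X : Type*} [MetricSpace X] [MeasurableSpace X]
    (μ : ProbabilityMeasure X) (x : X) : ℝ :=
  LPdist (diracPM x) μ

/-- The s-witness function. -/
noncomputable def switness {X : Type*} [MetricSpace X] [MeasurableSpace X]
    (s : ℝ) (μ : ProbabilityMeasure X) (x : X) : ℝ :=
  LPsdist s (diracPM x) μ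

/-!
A surjective isometry `φ` commutes with `unitDistSet`, hence preserves the property
`unitDistSet (unitDistSet {μ}) = {μ}`, and in a normed space this property characterises Dirac
measures. The characterisation rests on the fact that two probability measures are at
Lévy–Prokhorov distance `1` exactly when their supports are `1`-separated. If `a` lies in the
support of `μ`, then `δ_a` belongs to `unitDistSet (unitDistSet {μ})`; conversely, a measure in
`unitDistSet (unitDistSet {δ_x})` cannot charge any `z ≠ x`, because in a normed space some `y`
satisfies `‖y - x‖ ≥ 1 > ‖y - z‖`.
-/

open ENNReal

section LPdist

variable {X : Type*} [MetricSpace X] [MeasurableSpace X] {μ ν : ProbabilityMeasure X}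

lemma LPdist_le {ε : ℝ} (hε : 0 < ε) (h : ∀ A, MeasurableSet A →
    (μ : Measure X) A ≤ (ν : Measure X) (thickening ε A) + ENNReal.ofReal ε) :
    LPdist μ ν ≤ ε :=
  csInf_le ⟨0, fun _ hε => hε.1.le⟩ ⟨hε, h⟩

lemma le_LPdist {r : ℝ} (h : ∀ ε, 0 < ε → (∀ A, MeasurableSet A →
    (μ : Measure X) A ≤ (ν : Measure X) (thickening ε A) + ENNReal.ofReal ε) → r ≤ ε) :
    r ≤ LPdist μ ν :=
  le_csInf ⟨1, one_pos, fun _ _ => le_add_left (prob_le_one.trans_eq ofReal_one.symm)⟩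
    fun ε hε => h ε hε.1 hε.2

lemma LPdist_le_one : LPdist μ ν ≤ 1 :=
  LPdist_le one_pos fun _ _ => le_add_left (prob_le_one.trans_eq ofReal_one.symm)

lemma LPdist_nonneg : 0 ≤ LPdist μ ν :=
  le_LPdist fun _ hε _ => hε.le

lemma LPdist_self (μ : ProbabilityMeasure X) : LPdist μ μ = 0 :=
  le_antisymm (le_of_forall_pos_le_add fun ε hε => by
    simpa using LPdist_le hε fun A _ =>
      le_add_right (measure_mono (self_subset_thickening hε A))) LPdist_nonneg

lemma measure_le_measure_thickening_add_of_LPdist_lt {ε : ℝ} (h : LPdist μ ν < ε) {A : Set X}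
    (hA : MeasurableSet A) :
    (μ : Measure X) A ≤ (ν : Measure X) (thickening ε A) + ENNReal.ofReal ε := by
  refine (exists_lt_of_csInf_lt ?_ h).elim fun δ ⟨⟨_, hδ⟩, hδε⟩ => ?_
  · exact ⟨1, one_pos, fun _ _ => le_add_left (prob_le_one.trans_eq ofReal_one.symm)⟩
  · exact (hδ A hA).trans (add_le_add (measure_mono (thickening_mono hδε.le A))
      (ofReal_le_ofReal hδε.le))

lemma eq_of_LPdist_eq_zero [BorelSpace X] (h : LPdist μ ν = 0) : μ = ν := by
  have hLP : levyProkhorovEDist (μ : Measure X) ν = 0 :=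
    nonpos_iff_eq_zero.1 <| levyProkhorovEDist_le_of_forall_le _ _ 0
      fun ε A hε hεtop hA => by
        simpa [ofReal_toReal hεtop.ne] using measure_le_measure_thickening_add_of_LPdist_lt
          (h.trans_lt (toReal_pos hε.ne' hεtop.ne)) hA
  exact congrArg LevyProkhorov.toMeasure <| eq_of_edist_eq_zero
    (x := (LevyProkhorov.ofMeasure μ : LevyProkhorov (ProbabilityMeasure X)))
    (y := LevyProkhorov.ofMeasure ν) hLP

end LPdist

@[simp]
lemma coe_diracPM {X : Type*} [MeasurableSpace X] (x : X) :
    (diracPM x : Measure X) = Measure.dirac x :=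
  rfl

section Support

variable {X : Type*} [TopologicalSpace X] [MeasurableSpace X]

@[simp]
lemma MeasureTheory.Measure.support_dirac [T1Space X] [MeasurableSingletonClass X] (x : X) :
    (Measure.dirac x).support = {x} :=
  Subset.antisymm
    (Measure.support_subset_of_isClosed isClosed_singleton
      ((mem_ae_dirac_iff (measurableSet_singleton x)).2 rfl))
    (singleton_subset_iff.2 <| (Measure.mem_support_iff_forall x).2 fun _ hU => by
      simp [Measure.dirac_apply_of_mem (mem_of_mem_nhds hU)])

lemma eq_diracPM_of_support_subset [HereditarilyLindelofSpace X] [MeasurableSingletonClass X]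
    {μ : ProbabilityMeasure X} {x : X} (h : (μ : Measure X).support ⊆ {x}) :
    μ = diracPM x := by
  have hnull : (μ : Measure X) {x}ᶜ = 0 :=
    measure_mono_null (compl_subset_compl.2 h) Measure.measure_compl_support
  have hx : (μ : Measure X) {x} = 1 := (prob_compl_eq_zero_iff (measurableSet_singleton x)).1 hnull
  apply Subtype.ext
  calc (μ : Measure X) = (μ : Measure X).restrict {x} :=
        (Measure.restrict_eq_self_of_ae_mem (mem_ae_iff.2 hnull)).symm
    _ = Measure.dirac x := by rw [Measure.restrict_singleton, hx, one_smul]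

end Support

section LPdistEqOne

variable {X : Type*} [MetricSpace X] [MeasurableSpace X] [OpensMeasurableSpace X]
  {μ ν : ProbabilityMeasure X}

lemma LPdist_lt_one_of_dist_lt_one {x y : X} (hx : x ∈ (μ : Measure X).support)
    (hy : y ∈ (ν : Measure X).support) (hxy : dist x y < 1) : LPdist μ ν < 1 := by
  set ρ := (1 - dist x y) / 3 with hρ_def
  have hρ : 0 < ρ := by positivity
  obtain ⟨η, hη, hηρ, hμ, hν⟩ : ∃ η : ℝ, 0 < η ∧ η ≤ ρ ∧
      ENNReal.ofReal η ≤ (μ : Measure X) (ball x ρ) ∧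
      ENNReal.ofReal η ≤ (ν : Measure X) (ball y ρ) := by
    obtain ⟨δ, -, hδ, hδ_lt⟩ := ENNReal.lt_iff_exists_real_btwn.1 <|
      lt_min (Metric.nhds_basis_ball.mem_measureSupport.1 hx ρ hρ)
        (Metric.nhds_basis_ball.mem_measureSupport.1 hy ρ hρ)
    have hmin := (ofReal_le_ofReal (min_le_left δ ρ)).trans hδ_lt.le
    exact ⟨min δ ρ, lt_min (ofReal_pos.1 hδ) hρ, min_le_right _ _,
      hmin.trans (min_le_left _ _), hmin.trans (min_le_right _ _)⟩
  have hε : 0 < 1 - η := by linarith [dist_nonneg (x := x) (y := y)]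
  have hsplit : (1 : ℝ≥0∞) = ENNReal.ofReal η + ENNReal.ofReal (1 - η) := by
    rw [← ofReal_add hη.le hε.le, add_sub_cancel, ofReal_one]
  -- `1 - η` is admissible: either `A` meets `ball x ρ`, and then its `(1 - η)`-thickening
  -- contains `ball y ρ`, or `A` misses a set of `μ`-mass at least `η`.
  refine (LPdist_le hε fun A hA => ?_).trans_lt (sub_lt_self 1 hη)
  by_cases hmeet : (A ∩ ball x ρ).Nonempty
  · obtain ⟨w, hwA, hw⟩ := hmeet
    have hsub : ball y ρ ⊆ thickening (1 - η) A := fun v hv =>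
      mem_thickening_iff.2 ⟨w, hwA, by
        have := dist_triangle4 v y x w
        rw [mem_ball] at hv hw
        rw [dist_comm y x, dist_comm x w] at this
        linarith⟩
    calc (μ : Measure X) A ≤ 1 := prob_le_one
      _ = ENNReal.ofReal η + ENNReal.ofReal (1 - η) := hsplit
      _ ≤ (ν : Measure X) (thickening (1 - η) A) + ENNReal.ofReal (1 - η) :=
        add_le_add_left (hν.trans (measure_mono hsub)) _
  · have hsub : A ⊆ (ball x ρ)ᶜ := fun z hzA hz => hmeet ⟨z, hzA, hz⟩
    calc (μ : Measure X) A ≤ (μ : Measure X) (ball x ρ)ᶜ := measure_mono hsub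
      _ = 1 - (μ : Measure X) (ball x ρ) := prob_compl_eq_one_sub measurableSet_ball
      _ ≤ ENNReal.ofReal (1 - η) :=
        tsub_le_iff_left.2 (hsplit.trans_le (add_le_add_left hμ _))
      _ ≤ (ν : Measure X) (thickening (1 - η) A) + ENNReal.ofReal (1 - η) := le_add_self

variable [HereditarilyLindelofSpace X]

lemma one_le_LPdist_of_forall_one_le_dist
    (h : ∀ x ∈ (μ : Measure X).support, ∀ y ∈ (ν : Measure X).support, 1 ≤ dist x y) :
    1 ≤ LPdist μ ν := by
  refine le_LPdist fun ε hε hLP => not_lt.1 fun hε1 => ?_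
  have hS : MeasurableSet (μ : Measure X).support := Measure.isClosed_support.measurableSet
  have hμ : (μ : Measure X) (μ : Measure X).support = 1 :=
    (prob_compl_eq_zero_iff hS).1 Measure.measure_compl_support
  have hν : (ν : Measure X) (thickening ε (μ : Measure X).support) = 0 := by
    refine measure_mono_null (t := (ν : Measure X).supportᶜ) (fun y hy hyν => ?_)
      Measure.measure_compl_support
    obtain ⟨x, hx, hxy⟩ := mem_thickening_iff.1 hy
    exact (h x hx y hyν).not_gt ((dist_comm x y).trans_lt hxy |>.trans hε1)
  have := hLP _ hS
  rw [hμ, hν, zero_add] at this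
  exact (ofReal_lt_one.2 hε1).not_ge this

lemma LPdist_eq_one_iff : LPdist μ ν = 1 ↔
    ∀ x ∈ (μ : Measure X).support, ∀ y ∈ (ν : Measure X).support, 1 ≤ dist x y :=
  ⟨fun h _ hx _ hy => not_lt.1 fun hxy => (LPdist_lt_one_of_dist_lt_one hx hy hxy).ne h,
    fun h => LPdist_le_one.antisymm (one_le_LPdist_of_forall_one_le_dist h)⟩

lemma LPdist_eq_one_comm : LPdist μ ν = 1 ↔ LPdist ν μ = 1 := by
  rw [LPdist_eq_one_iff, LPdist_eq_one_iff]
  exact ⟨fun h y hy x hx => dist_comm x y ▸ h x hx y hy,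
    fun h x hx y hy => dist_comm y x ▸ h y hy x hx⟩

lemma LPdist_diracPM_eq_one_iff (x : X) :
    LPdist (diracPM x) ν = 1 ↔ ∀ y ∈ (ν : Measure X).support, 1 ≤ dist x y := by
  rw [LPdist_eq_one_iff]
  simp

end LPdistEqOne

lemma exists_one_le_dist_dist_lt_one {E : Type*} [NormedAddCommGroup E] [NormedSpace ℝ E]
    {x z : E} (h : z ≠ x) : ∃ y, 1 ≤ dist x y ∧ dist z y < 1 := by
  obtain hxz | hxz := le_or_gt 1 (dist x z)
  · exact ⟨z, hxz, by simp⟩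
  · have hd : 0 < dist x z := dist_pos.2 h.symm
    refine ⟨AffineMap.lineMap x z (dist x z)⁻¹, ?_, ?_⟩
    · rw [dist_left_lineMap, Real.norm_of_nonneg (inv_nonneg.2 hd.le), inv_mul_cancel₀ hd.ne']
    · have := one_le_inv_iff₀.2 ⟨hd, hxz.le⟩
      rw [dist_right_lineMap, Real.norm_of_nonpos (by linarith), neg_sub, sub_mul,
        inv_mul_cancel₀ hd.ne', one_mul]
      linarith

section UnitDistSet

variable {X : Type*} [MetricSpace X] [MeasurableSpace X]

lemma image_unitDistSet {φ : ProbabilityMeasure X → ProbabilityMeasure X}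
    (hsurj : Function.Surjective φ) (hiso : ∀ μ ν, LPdist (φ μ) (φ ν) = LPdist μ ν)
    (𝒜 : Set (ProbabilityMeasure X)) : φ '' unitDistSet 𝒜 = unitDistSet (φ '' 𝒜) := by
  ext ν
  obtain ⟨ν, rfl⟩ := hsurj ν
  constructor
  · rintro ⟨ν', hν', hφ⟩ _ ⟨μ, hμ, rfl⟩
    rw [← hφ, hiso]
    exact hν' μ hμ
  · refine fun hν => ⟨ν, fun μ hμ => ?_, rfl⟩
    rw [← hiso]
    exact hν _ (mem_image_of_mem φ hμ)

variable [OpensMeasurableSpace X] [HereditarilyLindelofSpace X]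

lemma mem_unitDistSet_unitDistSet_singleton (μ : ProbabilityMeasure X) :
    μ ∈ unitDistSet (unitDistSet {μ}) :=
  fun _ hν => LPdist_eq_one_comm.1 (hν μ rfl)

end UnitDistSet

lemma unitDistSet_unitDistSet_singleton_eq_iff {X : Type*} [NormedAddCommGroup X]
    [NormedSpace ℝ X] [MeasurableSpace X] [OpensMeasurableSpace X] [HereditarilyLindelofSpace X]
    (μ : ProbabilityMeasure X) :
    unitDistSet (unitDistSet {μ}) = {μ} ↔ μ ∈ range diracPM := by
  constructor
  · intro h
    obtain ⟨a, ha⟩ := Measure.nonempty_support (IsProbabilityMeasure.ne_zero (μ : Measure X))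
    have hδ : diracPM a ∈ unitDistSet (unitDistSet {μ}) := fun ν hν =>
      LPdist_eq_one_comm.1 <|
        (LPdist_diracPM_eq_one_iff a).2 (LPdist_eq_one_iff.1 (hν μ rfl) a ha)
    rw [h] at hδ
    exact ⟨a, hδ⟩
  · rintro ⟨x, rfl⟩
    refine Subset.antisymm (fun ϑ hϑ => eq_diracPM_of_support_subset fun z hz => ?_)
      (singleton_subset_iff.2 (mem_unitDistSet_unitDistSet_singleton _))
    by_contra hzx
    obtain ⟨y, hxy, hzy⟩ := exists_one_le_dist_dist_lt_one hzx
    have hy : diracPM y ∈ unitDistSet {diracPM x} := by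
      rintro _ rfl
      exact (LPdist_diracPM_eq_one_iff x).2 (by simpa using hxy)
    exact ((LPdist_diracPM_eq_one_iff y).1 (hϑ _ hy) z hz).not_gt (dist_comm y z ▸ hzy)

theorem image_dirac_eq_dirac_general {X : Type*} [NormedAddCommGroup X] [NormedSpace ℝ X]
    [SeparableSpace X] [MeasurableSpace X] [BorelSpace X]
    (φ : ProbabilityMeasure X → ProbabilityMeasure X)
    (hsurj : Function.Surjective φ)
    (hiso : ∀ μ ν : ProbabilityMeasure X, LPdist (φ μ) (φ ν) = LPdist μ ν) :
    φ '' (Set.range fun x : X => diracPM x) = Set.range fun x : X => diracPM x := by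
  have : SecondCountableTopology X := UniformSpace.secondCountable_of_separable X
  have hinj : Function.Injective φ := fun μ ν h =>
    eq_of_LPdist_eq_zero (by rw [← hiso, h, LPdist_self])
  ext ν
  obtain ⟨μ, rfl⟩ := hsurj ν
  rw [hinj.mem_set_image, ← unitDistSet_unitDistSet_singleton_eq_iff,
    ← unitDistSet_unitDistSet_singleton_eq_iff, ← image_singleton,
    ← image_unitDistSet hsurj hiso, ← image_unitDistSet hsurj hiso, hinj.image_injective.eq_iff]

/-- A surjective Lévy–Prokhorov isometry maps the set of Dirac measures onto itself. -/
theorem image_dirac_eq_dirac {X : Type*} [NormedAddCommGroup X] [NormedSpace ℝ X]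
    [CompleteSpace X] [SeparableSpace X] [MeasurableSpace X] [BorelSpace X]
    (φ : ProbabilityMeasure X → ProbabilityMeasure X)
    (hsurj : Function.Surjective φ)
    (hiso : ∀ μ ν : ProbabilityMeasure X, LPdist (φ μ) (φ ν) = LPdist μ ν) :
    φ '' (Set.range fun x : X => diracPM x) = Set.range fun x : X => diracPM x :=
  image_dirac_eq_dirac_general φ hsurj hiso
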